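/- For every natural number n and every real number x, the series Σ_{ℓ=1}^{∞} 2^{−ℓ} E_n^{(2ℓ)}(ℓ + 2x − 1) converges absolutely and E_n(x) = 2^{−n} Σ_{ℓ=1}^{∞} 2^{−ℓ} E_n^{(2ℓ)}(ℓ + 2x − 1). -/

import Mathlib

open Finset

/-- The Euler numbers `E_n`: `E_0 = 1`, `E_n = 0` for odd `n`, and
`∑_{j=0}^{m} C(2m,2j) E_{2j} = 0` for `m ≥ 1`. -/
noncomputable def eulerNumber : ℕ → ℝ
  | 0 => 1
  | n + 1 =>
    if Even (n + 1) then
      -∑ j ∈ (Finset.range (n + 1)).attach,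
        ((n + 1).choose j.1 : ℝ) * eulerNumber j.1
    else 0
decreasing_by exact Finset.mem_range.mp j.2

/-- The Euler polynomial `E_n(x) = ∑_{k=0}^n C(n,k) (E_k/2^k) (x - 1/2)^{n-k}`. -/
noncomputable def eulerPoly (n : ℕ) (x : ℝ) : ℝ :=
  ∑ k ∈ Finset.range (n + 1), (n.choose k : ℝ) * (eulerNumber k / 2 ^ k) * (x - 1/2) ^ (n - k)

/-- The generalized Euler numbers `E_n^{(p)}(0)`. -/
noncomputable def genEulerNumber : ℕ → ℕ → ℝ
  | 0, n => if n = 0 then 1 else 0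
  | p + 1, n => ∑ k ∈ Finset.range (n + 1),
      (n.choose k : ℝ) * genEulerNumber p k * eulerPoly (n - k) 0

/-- The generalized Euler polynomial `E_n^{(p)}(x) = ∑_{k=0}^n C(n,k) x^k E_{n-k}^{(p)}(0)`. -/
noncomputable def genEulerPoly (p n : ℕ) (x : ℝ) : ℝ :=
  ∑ k ∈ Finset.range (n + 1), (n.choose k : ℝ) * x ^ k * genEulerNumber p (n - k)

/-!
The exponential generating function of `E_n^{(2ℓ)}(ℓ + 2x - 1)` is `h(z)^ℓ e^{(2x-1)z}` with
`h(z) = sech²(z/2)`, and that of `2^n E_n(x)` is `sech(z) e^{(2x-1)z}`. The double-angle formula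
`cosh z + 1 = 2 cosh²(z/2)` gives `sech z = (h/2) / (1 - h/2)`, so the identity is the geometric
series `∑_{ℓ ≥ 1} (h/2)^ℓ` read off coefficientwise. It converges coefficientwise because `h/2` has
constant term `1/2`: the `m`-th coefficient of `(c + g)^ℓ` with `g(0) = 0` is a fixed linear
combination of `binom(ℓ, i) c^(ℓ - i)`, `i ≤ m`.
-/

namespace PowerSeries

variable {R : Type*} [CommRing R]

theorem constantCoeff_rescale (a : R) (f : R⟦X⟧) :
    constantCoeff (rescale a f) = constantCoeff f := by
  rw [← coeff_zero_eq_constantCoeff_apply, coeff_rescale, pow_zero, one_mul,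
    coeff_zero_eq_constantCoeff_apply]

theorem rescale_exp_pow [Algebra ℚ R] (a : R) (k : ℕ) :
    rescale a (exp R) ^ k = rescale (k * a) (exp R) := by
  rw [← map_pow, exp_pow_eq_rescale_exp, rescale_rescale]

theorem coeff_C_add_pow {h : R⟦X⟧} (hh : constantCoeff h = 0) (c : R) (ℓ m : ℕ) :
    coeff m ((C c + h) ^ ℓ) =
      ∑ i ∈ range (m + 1), (ℓ.choose i : R) * c ^ (ℓ - i) * coeff m (h ^ i) := by
  have key : ∀ i, coeff m (h ^ i * C c ^ (ℓ - i) * (ℓ.choose i : R⟦X⟧)) =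
      (ℓ.choose i : R) * c ^ (ℓ - i) * coeff m (h ^ i) := by
    intro i
    rw [← map_pow, ← map_natCast (C (R := R)), mul_assoc, ← map_mul, mul_comm, coeff_C_mul]
    ring
  rw [add_comm, add_pow, map_sum]
  simp only [key]
  calc _ = ∑ i ∈ range (ℓ + m + 1), (ℓ.choose i : R) * c ^ (ℓ - i) * coeff m (h ^ i) := by
        refine sum_subset (range_subset_range.mpr (by omega)) fun i _ hi => ?_
        rw [Nat.choose_eq_zero_of_lt (by simpa using hi)]
        simp
    _ = _ := by
        refine (sum_subset (range_subset_range.mpr (by omega)) fun i _ hi => ?_).symm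
        obtain ⟨g, hg⟩ := pow_dvd_pow_of_dvd (X_dvd_iff.mpr hh) i
        rw [hg, coeff_X_pow_mul', if_neg (by simpa using hi), mul_zero]

variable {𝕜 : Type*} [NormedField 𝕜]

theorem summable_coeff_pow {f : 𝕜⟦X⟧} (hf : ‖constantCoeff f‖ < 1) (m : ℕ) :
    Summable fun ℓ => coeff m (f ^ ℓ) := by
  set c := constantCoeff f
  have hsplit : f = C c + (f - C c) := by ring
  have hh : constantCoeff (f - C c) = 0 := by simp [c]
  rw [hsplit]
  simp_rw [coeff_C_add_pow hh]
  refine summable_sum fun i _ => Summable.mul_right _ ?_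
  refine (summable_nat_add_iff i).mp ?_
  simpa using summable_choose_mul_geometric_of_norm_lt_one i hf

open WithPiTopology in
theorem hasSum_pow_of_norm_constantCoeff_lt_one {f : 𝕜⟦X⟧} (hf : ‖constantCoeff f‖ < 1) :
    HasSum (f ^ ·) (1 - f)⁻¹ := by
  have hs : Summable (f ^ ·) := (summable_iff_summable_coeff _).mpr (summable_coeff_pow hf)
  have hne : constantCoeff (1 - f) ≠ 0 := by
    intro h0
    rw [map_sub, map_one, sub_eq_zero] at h0
    simp [← h0] at hf
  rw [← (eq_inv_iff_mul_eq_one hne).mpr hs.tsum_pow_mul_one_sub]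
  exact hs.hasSum

end PowerSeries

open PowerSeries Nat

section Egf

variable {K : Type*} [Field K]

noncomputable def egf (a : ℕ → K) : K⟦X⟧ := mk fun n => a n / n !

@[simp]
theorem coeff_egf (a : ℕ → K) (n : ℕ) : coeff n (egf a) = a n / n ! := coeff_mk _ _

theorem egf_mul [CharZero K] (a b : ℕ → K) :
    egf a * egf b = egf fun n => ∑ k ∈ range (n + 1), (n.choose k : K) * a k * b (n - k) := by
  ext n
  rw [coeff_mul, Nat.sum_antidiagonal_eq_sum_range_succ_mk, coeff_egf, sum_div]
  refine sum_congr rfl fun k hk => ?_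
  have : (n ! : K) ≠ 0 := mod_cast n.factorial_ne_zero
  rw [coeff_egf, coeff_egf, Nat.cast_choose K (mem_range_succ_iff.mp hk)]
  field_simp

theorem constantCoeff_egf (a : ℕ → K) : constantCoeff (egf a) = a 0 := by
  simp [egf]

theorem rescale_egf (c : K) (a : ℕ → K) : rescale c (egf a) = egf fun n => c ^ n * a n := by
  ext n
  simp [mul_div_assoc]

theorem egf_pow_eq_rescale_exp [CharZero K] (c : K) : egf (c ^ ·) = rescale c (exp K) := by
  ext n
  simp [div_eq_mul_inv]

end Egf

theorem eulerNumber_succ (n : ℕ) :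
    eulerNumber (n + 1) =
      if Even (n + 1) then -∑ j ∈ range (n + 1), ((n + 1).choose j : ℝ) * eulerNumber j else 0 := by
  rw [eulerNumber, sum_attach (range (n + 1)) fun j => ((n + 1).choose j : ℝ) * eulerNumber j]

theorem eulerNumber_of_odd {n : ℕ} (hn : Odd n) : eulerNumber n = 0 := by
  obtain ⟨m, rfl⟩ : ∃ m, n = m + 1 := ⟨n - 1, by have := hn.pos; omega⟩
  rw [eulerNumber_succ, if_neg (Nat.not_even_iff_odd.mpr hn)]

theorem sum_choose_mul_eulerNumber {n : ℕ} (hn : Even n) (hn0 : n ≠ 0) :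
    ∑ k ∈ range (n + 1), (n.choose k : ℝ) * eulerNumber k = 0 := by
  obtain ⟨m, rfl⟩ := Nat.exists_eq_add_one_of_ne_zero hn0
  rw [sum_range_succ, eulerNumber_succ, if_pos hn, Nat.choose_self]
  ring

theorem eulerNumber_mul_neg_one_pow_sub {k n : ℕ} (hk : k ≤ n) :
    eulerNumber k * (-1) ^ (n - k) = eulerNumber k * (-1) ^ n := by
  rcases Nat.even_or_odd k with hev | hodd
  · rw [← Nat.sub_add_cancel hk, pow_add, hev.neg_one_pow, mul_one, Nat.add_sub_cancel]
  · simp [eulerNumber_of_odd hodd]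

theorem sum_choose_mul_eulerNumber_mul_one_add_neg_one_pow (n : ℕ) :
    ∑ k ∈ range (n + 1), (n.choose k : ℝ) * eulerNumber k * (1 + (-1) ^ (n - k)) =
      if n = 0 then 2 else 0 := by
  have hterm : ∀ k ∈ range (n + 1), (n.choose k : ℝ) * eulerNumber k * (1 + (-1) ^ (n - k)) =
      (n.choose k : ℝ) * eulerNumber k * (1 + (-1) ^ n) := fun k hk => by
    linear_combination (n.choose k : ℝ) * eulerNumber_mul_neg_one_pow_sub (mem_range_succ_iff.mp hk)
  rw [sum_congr rfl hterm, ← sum_mul]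
  rcases Nat.even_or_odd n with hev | hodd
  · split_ifs with hn0
    · subst hn0; norm_num [eulerNumber]
    · rw [sum_choose_mul_eulerNumber hev hn0, zero_mul]
  · rw [hodd.neg_one_pow, if_neg (by rintro rfl; simp at hodd)]
    ring

theorem egf_eulerNumber_mul_exp_add_exp_neg :
    egf eulerNumber * (exp ℝ + rescale (-1) (exp ℝ)) = 2 := by
  have hcosh : exp ℝ + rescale (-1) (exp ℝ) = egf fun n => 1 + (-1) ^ n := by
    ext n
    simp [add_mul, div_eq_mul_inv]
  rw [hcosh, egf_mul]
  ext n
  rw [coeff_egf, sum_choose_mul_eulerNumber_mul_one_add_neg_one_pow, ← map_ofNat C 2, coeff_C]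
  split_ifs <;> simp_all

theorem egf_eulerPoly (x : ℝ) :
    egf (eulerPoly · x) = rescale (1 / 2) (egf eulerNumber) * rescale (x - 1 / 2) (exp ℝ) := by
  rw [rescale_egf, ← egf_pow_eq_rescale_exp, egf_mul]
  congr 1
  funext n
  refine sum_congr rfl fun k _ => ?_
  rw [div_pow, one_pow, div_mul_eq_mul_div, one_mul]

theorem egf_genEulerNumber (p : ℕ) : egf (genEulerNumber p) = egf (eulerPoly · 0) ^ p := by
  induction p with
  | zero =>
    ext n
    simp only [coeff_egf, genEulerNumber, pow_zero, coeff_one]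
    split_ifs <;> simp_all
  | succ p ih =>
    rw [pow_succ, ← ih, egf_mul]
    rfl

theorem egf_genEulerPoly (p : ℕ) (y : ℝ) :
    egf (genEulerPoly p · y) = rescale y (exp ℝ) * egf (genEulerNumber p) := by
  rw [← egf_pow_eq_rescale_exp, egf_mul]
  rfl

theorem egf_genEulerPoly_two_mul (ℓ : ℕ) (x : ℝ) :
    egf (genEulerPoly (2 * ℓ) · (ℓ + 2 * x - 1)) =
      (rescale (1 / 2) (egf eulerNumber) ^ 2) ^ ℓ * rescale (2 * x - 1) (exp ℝ) := by
  rw [egf_genEulerPoly, egf_genEulerNumber, egf_eulerPoly, mul_pow, ← pow_mul, rescale_exp_pow,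
    mul_left_comm, exp_mul_exp_eq_exp_add]
  congr 3
  push_cast
  ring

theorem two_mul_egf_eulerNumber :
    2 * egf eulerNumber = rescale (1 / 2) (egf eulerNumber) ^ 2 * (1 + egf eulerNumber) := by
  set ε := egf eulerNumber
  set e := rescale (1 / 2) ε
  set c := rescale (1 / 2) (exp ℝ) + rescale (-(1 / 2)) (exp ℝ)
  have hε : ε * (exp ℝ + rescale (-1) (exp ℝ)) = 2 := egf_eulerNumber_mul_exp_add_exp_neg
  have he : e * c = 2 := by
    rw [← map_ofNat (rescale (1 / 2 : ℝ)) 2, ← hε, map_mul, map_add, rescale_rescale]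
    norm_num [e, c]
  have hc : c ^ 2 = exp ℝ + rescale (-1) (exp ℝ) + 2 := by
    calc c ^ 2 = rescale (1 / 2) (exp ℝ) * rescale (1 / 2) (exp ℝ)
          + 2 * (rescale (1 / 2) (exp ℝ) * rescale (-(1 / 2)) (exp ℝ))
          + rescale (-(1 / 2)) (exp ℝ) * rescale (-(1 / 2)) (exp ℝ) := by ring
      _ = _ := by
        rw [exp_mul_exp_eq_exp_add, exp_mul_exp_eq_exp_add, exp_mul_exp_eq_exp_add]
        norm_num
        ring
  -- `4ε = e²c²ε = e²(d + 2)ε = e²(2 + 2ε)` with `d = e^z + e^{-z}`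
  have h4 : (2 : ℝ⟦X⟧) * (2 * ε) = 2 * (e ^ 2 * (1 + ε)) := by
    linear_combination (-(e * c + 2) * ε) * he + e ^ 2 * ε * hc + e ^ 2 * hε
  have h2 : (2 : ℝ⟦X⟧) ≠ 0 := fun h => by
    simpa [map_ofNat] using congrArg constantCoeff h
  exact mul_left_cancel₀ h2 h4

open WithPiTopology in
theorem hasSum_egf_genEulerPoly (x : ℝ) :
    HasSum (fun j : ℕ =>
        C ((1 / 2 : ℝ) ^ (j + 1)) * egf (genEulerPoly (2 * (j + 1)) · ((j + 1 : ℕ) + 2 * x - 1)))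
      (egf fun m => 2 ^ m * eulerPoly m x) := by
  set e := rescale (1 / 2) (egf eulerNumber)
  set f := C (1 / 2 : ℝ) * e ^ 2
  set W := rescale (2 * x - 1) (exp ℝ)
  have hf : constantCoeff f = 1 / 2 := by
    simp [f, e, constantCoeff_rescale, constantCoeff_egf, eulerNumber]
  have hinv : (1 - f)⁻¹ * f = egf eulerNumber := by
    have hne : constantCoeff (1 - f) ≠ 0 := by
      rw [map_sub, map_one, hf]; norm_num
    have hhalf : C (1 / 2 : ℝ) * 2 = 1 := by
      rw [← map_ofNat C 2, ← map_mul]; norm_num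
    rw [mul_comm, eq_comm, eq_mul_inv_iff_mul_eq hne]
    linear_combination C (1 / 2 : ℝ) * two_mul_egf_eulerNumber - egf eulerNumber * hhalf
  have hlim : egf (fun m => 2 ^ m * eulerPoly m x) = (1 - f)⁻¹ * (f * W) := by
    rw [← rescale_egf, egf_eulerPoly, map_mul, rescale_rescale, rescale_rescale, ← mul_assoc,
      hinv, show (x - 1 / 2) * 2 = 2 * x - 1 by ring, show (1 / 2 : ℝ) * 2 = 1 by norm_num,
      rescale_one, RingHom.id_apply]
  have hterm (j : ℕ) : f ^ j * (f * W) =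
      C ((1 / 2 : ℝ) ^ (j + 1)) * egf (genEulerPoly (2 * (j + 1)) · ((j + 1 : ℕ) + 2 * x - 1)) := by
    rw [egf_genEulerPoly_two_mul, map_pow]
    ring
  rw [hlim, ← funext hterm]
  exact (hasSum_pow_of_norm_constantCoeff_lt_one (by rw [hf]; norm_num)).mul_right (f * W)

open WithPiTopology in
theorem hasSum_genEulerPoly (n : ℕ) (x : ℝ) :
    HasSum (fun j : ℕ =>
        (1 / 2 : ℝ) ^ (j + 1) * genEulerPoly (2 * (j + 1)) n ((j + 1 : ℝ) + 2 * x - 1))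
      (2 ^ n * eulerPoly n x) := by
  have hn : (n ! : ℝ) ≠ 0 := by positivity
  have h := ((hasSum_iff_hasSum_coeff _).mp (hasSum_egf_genEulerPoly x) n).mul_left (n ! : ℝ)
  simpa only [coeff_C_mul, coeff_egf, Nat.cast_add, Nat.cast_one, mul_left_comm (n ! : ℝ),
    mul_div_cancel₀ _ hn] using h

/-- `E_n(x) = 2^{-n} ∑_{ℓ=1}^∞ 2^{-ℓ} E_n^{(2ℓ)}(ℓ + 2x - 1)`, the series converging
absolutely (indexed here by `ℓ = j + 1`, `j : ℕ`). -/
theorem euler_poly_eq_tsum_genEulerPoly_two (n : ℕ) (x : ℝ) :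
    Summable (fun j : ℕ =>
      |(1 / 2 : ℝ) ^ (j + 1) * genEulerPoly (2 * (j + 1)) n ((j + 1 : ℝ) + 2 * x - 1)|) ∧
    eulerPoly n x = (1 / 2 ^ n) * ∑' j : ℕ,
      (1 / 2 : ℝ) ^ (j + 1) * genEulerPoly (2 * (j + 1)) n ((j + 1 : ℝ) + 2 * x - 1) := by
  have h := hasSum_genEulerPoly n x
  refine ⟨summable_abs_iff.mpr h.summable, ?_⟩
  rw [h.tsum_eq]
  field_simp
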